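/- arXiv:1902.04796 — 2 statements merged into one kernel-verified Lean document; each statement's English description precedes it below -/
import Mathlib

section
/- Under the stated hypotheses, the self-energy matrix Σ := A − G⁻¹ satisfies Σ_{ij} = 0 whenever i > p or j > p; that is, the precision matrix G⁻¹ agrees with A in all entries outside the upper-left p×p block. -/
/-!
Let `w(x) = exp (-xᵀ A x / 2)` and let `k` index a coordinate of the Gaussian block. Since
`A_kk > 0`, `w` is a one-dimensional Gaussian in `x_k`, and integrating by parts in `x_k` alone
(Stein's identity) gives `∫ (A x)_k x_j w dx_k = δ_kj ∫ w dx_k` for every value of the remaining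
coordinates; by Fubini the same holds against `dμ₁ dx₂`. Hence the rows of `A G` indexed by the
Gaussian block are rows of the identity, so `A` and `G⁻¹` share these rows, and by symmetry of
`A` and `G` also these columns.
-/

open MeasureTheory Matrix Real

lemma integrable_quadratic_mul_exp_neg_mul_sq {b : ℝ} (hb : 0 < b) (α β γ : ℝ) :
    Integrable fun s : ℝ => (α * s ^ 2 + β * s + γ) * exp (-b * s ^ 2) := by
  have h2 : Integrable fun s : ℝ => s ^ 2 * exp (-b * s ^ 2) := by
    simpa [rpow_two] using integrable_rpow_mul_exp_neg_mul_sq hb (s := 2) (by norm_num)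
  refine (((h2.const_mul α).add ((integrable_mul_exp_neg_mul_sq hb).const_mul β)).add
    ((integrable_exp_neg_mul_sq hb).const_mul γ)).congr (ae_of_all _ fun s => ?_)
  simp only [Pi.add_apply]
  ring

/-- Completing the square reduces this to a centred Gaussian shifted by `b / a`. -/
lemma integrable_quadratic_mul_exp_neg_quadratic {a : ℝ} (ha : 0 < a) (b c α β γ : ℝ) :
    Integrable fun t : ℝ =>
      (α * t ^ 2 + β * t + γ) * exp (-(1 / 2) * (a * t ^ 2 + 2 * b * t + c)) := by
  have hcentred := ((integrable_quadratic_mul_exp_neg_mul_sq (half_pos ha) α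
    (β - 2 * α * (b / a)) (α * (b / a) ^ 2 - β * (b / a) + γ)).comp_add_right (b / a)
    ).const_mul (exp (b ^ 2 / (2 * a) - c / 2))
  refine hcentred.congr (ae_of_all _ fun t => ?_)
  have hsquare : exp (b ^ 2 / (2 * a) - c / 2) * exp (-(a / 2) * (t + b / a) ^ 2)
      = exp (-(1 / 2) * (a * t ^ 2 + 2 * b * t + c)) := by
    rw [← exp_add]
    congr 1
    field_simp
    ring
  dsimp only
  rw [← hsquare]
  ring

/-- Stein's identity `∫ (a t + b) f w = ∫ f' w` for the Gaussian weight
`w t = exp (-(a t² + 2 b t + c) / 2)` and the affine test function `f t = α t + β`. -/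
lemma integral_stein_affine {a : ℝ} (ha : 0 < a) (b c α β : ℝ) :
    ∫ t : ℝ, ((a * t + b) * (α * t + β) - α) *
      exp (-(1 / 2) * (a * t ^ 2 + 2 * b * t + c)) = 0 := by
  set E := fun t : ℝ => exp (-(1 / 2) * (a * t ^ 2 + 2 * b * t + c))
  have hderiv : ∀ t, HasDerivAt (fun t => (α * t + β) * E t)
      (-(((a * t + b) * (α * t + β) - α) * E t)) t := by
    intro t
    have hexponent : HasDerivAt (fun t : ℝ => -(1 / 2) * (a * t ^ 2 + 2 * b * t + c))
        (-(a * t + b)) t := by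
      refine ((((hasDerivAt_pow 2 t).const_mul a).add
        ((hasDerivAt_id t).const_mul (2 * b))).add_const c).const_mul (-(1 / 2) : ℝ)
        |>.congr_deriv ?_
      norm_num
      ring
    refine (((hasDerivAt_id t).const_mul α).add_const β).mul hexponent.exp |>.congr_deriv ?_
    simp only [id, E]
    ring
  have hf' : Integrable fun t => -(((a * t + b) * (α * t + β) - α) * E t) :=
    (integrable_quadratic_mul_exp_neg_quadratic ha b c (-(a * α)) (-(a * β + b * α))
      (α - b * β)).congr (ae_of_all _ fun t => by ring)
  have hf : Integrable fun t => (α * t + β) * E t :=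
    (integrable_quadratic_mul_exp_neg_quadratic ha b c 0 α β).congr
      (ae_of_all _ fun t => by ring)
  have h := integral_eq_zero_of_hasDerivAt_of_integrable hderiv hf' hf
  rwa [integral_neg, neg_eq_zero] at h

noncomputable def gaussianWeight {n : Type*} [Fintype n]
    (A : Matrix n n ℝ) (v : n → ℝ) : ℝ :=
  exp (-(1 / 2) * (v ⬝ᵥ A *ᵥ v))

lemma Function.update_eq_update_zero_add_single {n M : Type*} [DecidableEq n] [AddZeroClass M]
    (y : n → M) (k : n) (t : M) :
    Function.update y k t = Function.update y k 0 + Pi.single k t := by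
  ext l
  rcases eq_or_ne l k with rfl | hl <;> simp [*]

section CoordinateLine

variable {n R : Type*} [Fintype n] [DecidableEq n] [CommRing R] {A : Matrix n n R}
  (y : n → R) (k : n) (t : R)

lemma mulVec_update_apply (l : n) :
    (A *ᵥ Function.update y k t) l = A l k * t + (A *ᵥ Function.update y k 0) l := by
  rw [Function.update_eq_update_zero_add_single y k t, mulVec_add, mulVec_single]
  simp [add_comm, mul_comm]

lemma update_dotProduct_mulVec_update (hA : A.IsSymm) :
    Function.update y k t ⬝ᵥ A *ᵥ Function.update y k t
      = A k k * t ^ 2 + 2 * (A *ᵥ Function.update y k 0) k * t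
        + Function.update y k 0 ⬝ᵥ A *ᵥ Function.update y k 0 := by
  set u := Function.update y k 0
  have hcross : u ⬝ᵥ A *ᵥ Pi.single k t = (A *ᵥ u) k * t := by
    rw [dotProduct_mulVec, ← mulVec_transpose, hA.eq, dotProduct_single]
  rw [Function.update_eq_update_zero_add_single y k t, mulVec_add, dotProduct_add, add_dotProduct,
    add_dotProduct, hcross, single_dotProduct, single_dotProduct, mulVec_single]
  simp only [Pi.smul_apply, col_apply, MulOpposite.smul_eq_mul_unop, MulOpposite.unop_op]
  ring

end CoordinateLine

lemma integral_stein_update {n : Type*} [Fintype n] [DecidableEq n] {A : Matrix n n ℝ}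
    (hA : A.IsSymm) (y : n → ℝ) {k : n} (hk : 0 < A k k) (j : n) :
    ∫ t : ℝ, ((A *ᵥ Function.update y k t) k * Function.update y k t j
        - (1 : Matrix n n ℝ) k j) * gaussianWeight A (Function.update y k t) = 0 := by
  set u := Function.update y k 0
  have hcoord : ∀ t, Function.update y k t j
      = (1 : Matrix n n ℝ) k j * t + (if j = k then 0 else y j) := by
    intro t
    rcases eq_or_ne j k with rfl | hj
    · simp
    · simp [hj, one_apply_ne' hj]
  have hintegrand : ∀ t, ((A *ᵥ Function.update y k t) k * Function.update y k t j
      - (1 : Matrix n n ℝ) k j) * gaussianWeight A (Function.update y k t)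
      = ((A k k * t + (A *ᵥ u) k) * ((1 : Matrix n n ℝ) k j * t + (if j = k then 0 else y j))
        - (1 : Matrix n n ℝ) k j) *
        exp (-(1 / 2) * (A k k * t ^ 2 + 2 * (A *ᵥ u) k * t + u ⬝ᵥ A *ᵥ u)) := by
    intro t
    rw [gaussianWeight, update_dotProduct_mulVec_update y k t hA, mulVec_update_apply, hcoord]
  simp only [hintegrand]
  exact integral_stein_affine hk _ _ _ _

lemma integral_eq_zero_of_forall_integral_update_eq_zero {E : Type*} [NormedAddCommGroup E]
    [NormedSpace ℝ E] {n : ℕ} (i : Fin n) {g : (Fin n → ℝ) → E} (hg : Integrable g)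
    (h : ∀ z, ∫ t : ℝ, g (Function.update z i t) = 0) :
    ∫ z, g z = 0 := by
  cases n with
  | zero => exact i.elim0
  | succ n =>
    have hmp := (volume_preserving_piFinSuccAbove (fun _ : Fin (n + 1) => ℝ) i).symm
    rw [← hmp.integral_comp' g, Measure.volume_eq_prod, integral_prod_symm _ ?integrable]
    case integrable =>
      exact (hmp.integrable_comp_emb (MeasurableEquiv.measurableEmbedding _)).mpr hg
    refine integral_eq_zero_of_ae (ae_of_all _ fun r => ?_)
    simpa [Fin.update_insertNth, Fin.insertNthEquiv] using h (i.insertNth 0 r)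

section Gibbs

variable {ι : Type*} [Fintype ι] [DecidableEq ι] {q : ℕ}
  {A : Matrix (ι ⊕ Fin q) (ι ⊕ Fin q) ℝ} {μ : Measure (ι → ℝ)} [SFinite μ]

lemma integral_stein_prod (hA : A.IsSymm) {k : Fin q} (hk : 0 < A (Sum.inr k) (Sum.inr k))
    (j : ι ⊕ Fin q)
    (hint : Integrable (fun x : (ι → ℝ) × (Fin q → ℝ) =>
      ((A *ᵥ Sum.elim x.1 x.2) (Sum.inr k) * Sum.elim x.1 x.2 j
        - (1 : Matrix (ι ⊕ Fin q) (ι ⊕ Fin q) ℝ) (Sum.inr k) j) *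
        gaussianWeight A (Sum.elim x.1 x.2)) (μ.prod volume)) :
    ∫ x, ((A *ᵥ Sum.elim x.1 x.2) (Sum.inr k) * Sum.elim x.1 x.2 j
        - (1 : Matrix (ι ⊕ Fin q) (ι ⊕ Fin q) ℝ) (Sum.inr k) j) *
      gaussianWeight A (Sum.elim x.1 x.2) ∂(μ.prod volume) = 0 := by
  rw [integral_prod _ hint]
  refine integral_eq_zero_of_ae ?_
  filter_upwards [hint.prod_right_ae] with x₁ hx₁
  refine integral_eq_zero_of_forall_integral_update_eq_zero k hx₁ fun z => ?_
  simpa only [Sum.elim_update_right] using integral_stein_update hA (Sum.elim x₁ z) hk j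

lemma sum_mul_integral_moment_eq (hA : A.IsSymm) {k : Fin q}
    (hk : 0 < A (Sum.inr k) (Sum.inr k)) (j : ι ⊕ Fin q)
    (hw : Integrable (fun x : (ι → ℝ) × (Fin q → ℝ) =>
      gaussianWeight A (Sum.elim x.1 x.2)) (μ.prod volume))
    (hmom : ∀ l, Integrable (fun x : (ι → ℝ) × (Fin q → ℝ) =>
      Sum.elim x.1 x.2 l * Sum.elim x.1 x.2 j * gaussianWeight A (Sum.elim x.1 x.2))
      (μ.prod volume)) :
    ∑ l, A (Sum.inr k) l * ∫ x, Sum.elim x.1 x.2 l * Sum.elim x.1 x.2 j *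
        gaussianWeight A (Sum.elim x.1 x.2) ∂(μ.prod volume)
      = (1 : Matrix (ι ⊕ Fin q) (ι ⊕ Fin q) ℝ) (Sum.inr k) j *
        ∫ x, gaussianWeight A (Sum.elim x.1 x.2) ∂(μ.prod volume) := by
  have hrow : ∀ x : (ι → ℝ) × (Fin q → ℝ),
      ∑ l, A (Sum.inr k) l *
          (Sum.elim x.1 x.2 l * Sum.elim x.1 x.2 j * gaussianWeight A (Sum.elim x.1 x.2))
        = (A *ᵥ Sum.elim x.1 x.2) (Sum.inr k) * Sum.elim x.1 x.2 j *
          gaussianWeight A (Sum.elim x.1 x.2) := by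
    intro x
    simp only [mulVec, dotProduct, Finset.sum_mul]
    exact Finset.sum_congr rfl fun l _ => by ring
  have hrow_int : Integrable (fun x : (ι → ℝ) × (Fin q → ℝ) =>
      (A *ᵥ Sum.elim x.1 x.2) (Sum.inr k) * Sum.elim x.1 x.2 j *
        gaussianWeight A (Sum.elim x.1 x.2)) (μ.prod volume) :=
    (integrable_finsetSum _ fun l _ => (hmom l).const_mul (A (Sum.inr k) l)).congr
      (ae_of_all _ hrow)
  have hstein := integral_stein_prod (μ := μ) hA hk j
    ((hrow_int.sub (hw.const_mul ((1 : Matrix (ι ⊕ Fin q) (ι ⊕ Fin q) ℝ) (Sum.inr k) j))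
      ).congr (ae_of_all _ fun x => by simp only [Pi.sub_apply]; ring))
  simp_rw [← integral_const_mul]
  rw [← integral_finsetSum _ fun l _ => (hmom l).const_mul _,
    integral_congr_ae (ae_of_all _ hrow), ← sub_eq_zero,
    ← integral_sub hrow_int (hw.const_mul _)]
  simpa only [sub_mul] using hstein

end Gibbs

lemma Matrix.apply_eq_inv_apply_of_mul_row_eq_one {n α : Type*} [Fintype n] [DecidableEq n]
    [CommRing α] {A G : Matrix n n α} (hG : IsUnit G.det) {i : n}
    (h : ∀ j, (A * G) i j = (1 : Matrix n n α) i j) (j : n) :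
    A i j = G⁻¹ i j :=
  calc A i j = (A * G * G⁻¹) i j := by rw [mul_nonsing_inv_cancel_right _ _ hG]
    _ = ((1 : Matrix n n α) * G⁻¹) i j := by simp only [mul_apply, h]
    _ = G⁻¹ i j := by rw [one_mul]

theorem classical_self_energy_sparsity_measure_general
    (p q : ℕ)
    (A : Matrix (Fin p ⊕ Fin q) (Fin p ⊕ Fin q) ℝ) (hA : A.IsSymm)
    (hA22 : ∀ v : Fin q → ℝ, v ≠ 0 → 0 < v ⬝ᵥ (A.toBlocks₂₂).mulVec v)
    (μ₁ : Measure (Fin p → ℝ)) [IsFiniteMeasure μ₁]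
    (hZint : Integrable (fun x : (Fin p → ℝ) × (Fin q → ℝ) =>
        Real.exp (-(1/2) * (Sum.elim x.1 x.2 ⬝ᵥ A.mulVec (Sum.elim x.1 x.2))))
        (μ₁.prod volume))
    (hmom : ∀ i j : Fin p ⊕ Fin q,
      Integrable (fun x : (Fin p → ℝ) × (Fin q → ℝ) =>
        Sum.elim x.1 x.2 i * Sum.elim x.1 x.2 j *
          Real.exp (-(1/2) * (Sum.elim x.1 x.2 ⬝ᵥ A.mulVec (Sum.elim x.1 x.2))))
        (μ₁.prod volume))
    (Z : ℝ)
    (hZdef : Z = ∫ x : (Fin p → ℝ) × (Fin q → ℝ),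
        Real.exp (-(1/2) * (Sum.elim x.1 x.2 ⬝ᵥ A.mulVec (Sum.elim x.1 x.2)))
        ∂(μ₁.prod volume))
    (hZpos : 0 < Z)
    (G : Matrix (Fin p ⊕ Fin q) (Fin p ⊕ Fin q) ℝ)
    (hGdef : ∀ i j : Fin p ⊕ Fin q, G i j = (1 / Z) *
      ∫ x : (Fin p → ℝ) × (Fin q → ℝ),
        Sum.elim x.1 x.2 i * Sum.elim x.1 x.2 j *
          Real.exp (-(1/2) * (Sum.elim x.1 x.2 ⬝ᵥ A.mulVec (Sum.elim x.1 x.2)))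
        ∂(μ₁.prod volume))
    (hGinv : IsUnit G.det) :
    ∀ i j : Fin p ⊕ Fin q, (i.isRight ∨ j.isRight) → (A - G⁻¹) i j = 0 := by
  have hdiag : ∀ k, 0 < A (Sum.inr k) (Sum.inr k) := fun k => by
    simpa [mulVec_single, toBlocks₂₂] using hA22 (Pi.single k 1) (by simp)
  have hmoment := fun k j =>
    sum_mul_integral_moment_eq (μ := μ₁) hA (hdiag k) j hZint (hmom · j)
  simp only [gaussianWeight, ← hZdef] at hmoment
  have hrow : ∀ k j, A (Sum.inr k) j = G⁻¹ (Sum.inr k) j := fun k =>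
    apply_eq_inv_apply_of_mul_row_eq_one hGinv fun j => by
      simp_rw [mul_apply, hGdef, mul_left_comm _ (1 / Z), ← Finset.mul_sum, hmoment]
      field_simp
  have hGsymm : G.IsSymm := IsSymm.ext fun i j => by simp only [hGdef, mul_comm (Sum.elim _ _ i)]
  intro i j hij
  rw [Matrix.sub_apply, sub_eq_zero]
  rcases i with i | k
  · rcases j with j | k
    · simp at hij
    · rw [← hA.apply, hrow, hGsymm.inv.apply]
  · exact hrow k j

/-- **Sparsity of the classical self-energy for a general impurity measure.**
The Gibbs weight is `exp(−½ xᵀAx) dx₂ dμ₁(x₁)` where `μ₁` is a finite nonzero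
Borel measure on `ℝ^p` and the lower-right block `A₂₂` is positive definite.
Then the precision matrix `G⁻¹` agrees with `A` outside the upper-left `p × p`
block, i.e. `Σ := A − G⁻¹` is supported on the fragment block. -/
theorem classical_self_energy_sparsity_measure
    (p q : ℕ)
    (A : Matrix (Fin p ⊕ Fin q) (Fin p ⊕ Fin q) ℝ) (hA : A.IsSymm)
    (hA22 : ∀ v : Fin q → ℝ, v ≠ 0 → 0 < v ⬝ᵥ (A.toBlocks₂₂).mulVec v)
    (μ₁ : Measure (Fin p → ℝ)) [IsFiniteMeasure μ₁] (hμ₁ : μ₁ ≠ 0)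
    (hZint : Integrable (fun x : (Fin p → ℝ) × (Fin q → ℝ) =>
        Real.exp (-(1/2) * (Sum.elim x.1 x.2 ⬝ᵥ A.mulVec (Sum.elim x.1 x.2))))
        (μ₁.prod volume))
    (hmom : ∀ i j : Fin p ⊕ Fin q,
      Integrable (fun x : (Fin p → ℝ) × (Fin q → ℝ) =>
        Sum.elim x.1 x.2 i * Sum.elim x.1 x.2 j *
          Real.exp (-(1/2) * (Sum.elim x.1 x.2 ⬝ᵥ A.mulVec (Sum.elim x.1 x.2))))
        (μ₁.prod volume))
    (Z : ℝ)
    (hZdef : Z = ∫ x : (Fin p → ℝ) × (Fin q → ℝ),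
        Real.exp (-(1/2) * (Sum.elim x.1 x.2 ⬝ᵥ A.mulVec (Sum.elim x.1 x.2)))
        ∂(μ₁.prod volume))
    (hZpos : 0 < Z)
    (G : Matrix (Fin p ⊕ Fin q) (Fin p ⊕ Fin q) ℝ)
    (hGdef : ∀ i j : Fin p ⊕ Fin q, G i j = (1 / Z) *
      ∫ x : (Fin p → ℝ) × (Fin q → ℝ),
        Sum.elim x.1 x.2 i * Sum.elim x.1 x.2 j *
          Real.exp (-(1/2) * (Sum.elim x.1 x.2 ⬝ᵥ A.mulVec (Sum.elim x.1 x.2)))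
        ∂(μ₁.prod volume))
    (hGinv : IsUnit G.det) :
    ∀ i j : Fin p ⊕ Fin q, (i.isRight ∨ j.isRight) → (A - G⁻¹) i j = 0 :=
  classical_self_energy_sparsity_measure_general p q A hA hA22 μ₁ hZint hmom Z hZdef hZpos G hGdef
    hGinv
end

section
/- Under the stated hypotheses, the lower-right (d−p)×(d−p) block of the matrix product G·A equals the identity: (GA)_{22} = I_{d−p}. -/
/-!
For `j ≥ p` the potential `U` is constant along `e_j`, so the Gibbs density
`ρ x = exp (-½ xᵀAx - U x)` has line derivative `-(A x)_j ρ` in that direction. Integrating by parts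
against `x ↦ x i` gives `∫ x_i (A x)_j ρ = δ_ij Z`, and `(G A)_ij = Z⁻¹ ∫ x_i (A x)_j ρ` by linearity.
No boundary terms appear: integration by parts on `ℝ^d` holds once `ρ`, `x_i ρ` and `x_i (A x)_j ρ`
are integrable, and `|x_i| ≤ 1 + x_i²` reduces the middle one to the second moments.
-/

open MeasureTheory Matrix

theorem MeasureTheory.Integrable.mul_of_integrable_mul_mul {α : Type*} [MeasurableSpace α]
    {μ : Measure α} {f g : α → ℝ} (hf : AEStronglyMeasurable f μ) (hg : Integrable g μ)
    (hffg : Integrable (fun x => f x * f x * g x) μ) :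
    Integrable (fun x => f x * g x) μ := by
  refine (hg.norm.add hffg.norm).mono' (hf.mul hg.1) (ae_of_all _ fun x => ?_)
  simp only [norm_mul, Real.norm_eq_abs, Pi.add_apply]
  have : |f x| ≤ 1 + |f x| * |f x| := by nlinarith [abs_nonneg (f x)]
  nlinarith [abs_nonneg (g x)]

variable {ι : Type*} [Fintype ι]

noncomputable def gibbsDensity (A : Matrix ι ι ℝ) (U : (ι → ℝ) → ℝ) (x : ι → ℝ) : ℝ :=
  Real.exp (-(1 / 2) * (x ⬝ᵥ A *ᵥ x) - U x)

theorem hasLineDerivAt_gibbsDensity {A : Matrix ι ι ℝ} (hA : A.IsSymm) {U : (ι → ℝ) → ℝ}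
    {v : ι → ℝ} (hU : ∀ x (t : ℝ), U (x + t • v) = U x) (x : ι → ℝ) :
    HasLineDerivAt ℝ (gibbsDensity A U) (-(v ⬝ᵥ A *ᵥ x) * gibbsDensity A U x) x v := by
  have hcross : x ⬝ᵥ A *ᵥ v = v ⬝ᵥ A *ᵥ x := by
    rw [dotProduct_mulVec, ← mulVec_transpose, hA, dotProduct_comm]
  have hquad : ∀ t : ℝ, (x + t • v) ⬝ᵥ A *ᵥ (x + t • v)
      = x ⬝ᵥ A *ᵥ x + (2 * (v ⬝ᵥ A *ᵥ x)) * t + (v ⬝ᵥ A *ᵥ v) * t ^ 2 := by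
    intro t
    simp only [mulVec_add, mulVec_smul, dotProduct_add, add_dotProduct, dotProduct_smul,
      smul_dotProduct, smul_eq_mul, hcross]
    ring
  have hpoly : HasDerivAt (fun t : ℝ => x ⬝ᵥ A *ᵥ x + (2 * (v ⬝ᵥ A *ᵥ x)) * t
      + (v ⬝ᵥ A *ᵥ v) * t ^ 2) (2 * (v ⬝ᵥ A *ᵥ x)) 0 :=
    ((((hasDerivAt_id (0 : ℝ)).const_mul _).const_add _).add
      ((hasDerivAt_pow 2 (0 : ℝ)).const_mul _)).congr_deriv (by simp)
  have hline : (fun t : ℝ => gibbsDensity A U (x + t • v)) = fun t => Real.exp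
      (-(1 / 2) * (x ⬝ᵥ A *ᵥ x + (2 * (v ⬝ᵥ A *ᵥ x)) * t + (v ⬝ᵥ A *ᵥ v) * t ^ 2) - U x) := by
    funext t; rw [gibbsDensity, hquad, hU]
  rw [HasLineDerivAt, hline]
  exact ((hpoly.const_mul _).sub_const _).exp.congr_deriv (by rw [gibbsDensity]; ring_nf)

theorem integral_mul_dotProduct_mulVec_mul_gibbsDensity {A : Matrix ι ι ℝ} (hA : A.IsSymm)
    {U : (ι → ℝ) → ℝ} {v : ι → ℝ} (hU : ∀ x (t : ℝ), U (x + t • v) = U x) (i : ι)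
    (hρ : Integrable (gibbsDensity A U))
    (hxρ : Integrable fun x => x i * gibbsDensity A U x)
    (hxAρ : Integrable fun x => x i * (v ⬝ᵥ A *ᵥ x) * gibbsDensity A U x) :
    ∫ x, x i * (v ⬝ᵥ A *ᵥ x) * gibbsDensity A U x = v i * ∫ x, gibbsDensity A U x := by
  have hcoord : ∀ x : ι → ℝ, HasLineDerivAt ℝ (fun y : ι → ℝ => y i) (v i) x v := fun x =>
    (ContinuousLinearMap.proj (R := ℝ) (φ := fun _ : ι => ℝ) i).hasFDerivAt.hasLineDerivAt v
  have hibp := integral_bilinear_hasLineDerivAt_right_eq_neg_left_of_integrable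
    (B := ContinuousLinearMap.mul ℝ ℝ) (μ := volume)
    (hρ.const_mul (v i)) (hxAρ.neg.congr (ae_of_all _ fun x => by
      simp only [Pi.neg_apply, ContinuousLinearMap.mul_apply']; ring)) hxρ
    (fun x _ => hcoord x) (fun x _ => hasLineDerivAt_gibbsDensity hA hU x)
  simp only [ContinuousLinearMap.mul_apply'] at hibp
  rw [integral_const_mul] at hibp
  rw [← neg_inj, ← hibp, ← integral_neg]
  congr 1 with x
  ring

section Moments

variable {μ : Measure (ι → ℝ)} {ρ : (ι → ℝ) → ℝ} (A : Matrix ι ι ℝ) (i j : ι)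

theorem mul_vecMul_apply_mul_eq_sum (x : ι → ℝ) (r : ℝ) :
    x i * (x ᵥ* A) j * r = ∑ k, x i * x k * r * A k j := by
  simp only [vecMul, dotProduct, Finset.mul_sum, Finset.sum_mul]
  exact Finset.sum_congr rfl fun k _ => by ring

theorem integrable_mul_vecMul_apply_mul
    (hmom : ∀ k, Integrable (fun x => x i * x k * ρ x) μ) :
    Integrable (fun x => x i * (x ᵥ* A) j * ρ x) μ := by
  simp_rw [mul_vecMul_apply_mul_eq_sum]
  exact integrable_finsetSum _ fun k _ => (hmom k).mul_const _

theorem integral_mul_vecMul_apply_mul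
    (hmom : ∀ k, Integrable (fun x => x i * x k * ρ x) μ) :
    ∫ x, x i * (x ᵥ* A) j * ρ x ∂μ = ∑ k, (∫ x, x i * x k * ρ x ∂μ) * A k j := by
  simp_rw [mul_vecMul_apply_mul_eq_sum, ← integral_mul_const]
  exact integral_finsetSum _ fun k _ => (hmom k).mul_const _

end Moments

theorem GA_lower_right_block_identity_general
    (d p : ℕ)
    (A : Matrix (Fin d) (Fin d) ℝ) (hA : A.IsSymm)
    (U : (Fin d → ℝ) → ℝ)
    (hU : ∀ x y : Fin d → ℝ, (∀ i : Fin d, (i : ℕ) < p → x i = y i) → U x = U y)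
    (hZint : Integrable (fun x : Fin d → ℝ =>
      Real.exp (-(1/2) * (x ⬝ᵥ A.mulVec x) - U x)))
    (hmom : ∀ i j : Fin d, Integrable (fun x : Fin d → ℝ =>
      x i * x j * Real.exp (-(1/2) * (x ⬝ᵥ A.mulVec x) - U x)))
    (Z : ℝ)
    (hZdef : Z = ∫ x : Fin d → ℝ, Real.exp (-(1/2) * (x ⬝ᵥ A.mulVec x) - U x))
    (G : Matrix (Fin d) (Fin d) ℝ)
    (hGdef : ∀ i j : Fin d, G i j = (1 / Z) * ∫ x : Fin d → ℝ,
      x i * x j * Real.exp (-(1/2) * (x ⬝ᵥ A.mulVec x) - U x)) :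
    ∀ i j : Fin d, p ≤ (i : ℕ) → p ≤ (j : ℕ) → (G * A) i j = (if i = j then 1 else 0) := by
  intro i j _ hj
  have hρ : Integrable (gibbsDensity A U) := hZint
  have hZ : Z = ∫ x, gibbsDensity A U x := hZdef
  have hmomi : ∀ k, Integrable fun x => x i * x k * gibbsDensity A U x := hmom i
  have hUj : ∀ x (t : ℝ), U (x + t • Pi.single j 1) = U x := fun x t =>
    hU _ _ fun k hk => by simp [Pi.single_eq_of_ne (Fin.ne_of_val_ne (by omega) : k ≠ j)]
  have hsymm : ∀ x : Fin d → ℝ, (x ᵥ* A) j = Pi.single j 1 ⬝ᵥ A *ᵥ x := fun x => by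
    rw [single_dotProduct, one_mul, ← vecMul_transpose, hA]
  have hxρ : Integrable fun x => x i * gibbsDensity A U x :=
    Integrable.mul_of_integrable_mul_mul (continuous_apply i).aestronglyMeasurable hρ (hmomi i)
  have hxAρ := integrable_mul_vecMul_apply_mul A i j hmomi
  simp_rw [hsymm] at hxAρ
  calc (G * A) i j = (1 / Z) * ∫ x, x i * (x ᵥ* A) j * gibbsDensity A U x := by
        rw [integral_mul_vecMul_apply_mul A i j hmomi, Finset.mul_sum, mul_apply]
        exact Finset.sum_congr rfl fun k _ => by rw [hGdef, mul_assoc]; rfl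
    _ = (1 / Z) * ((Pi.single j 1 : Fin d → ℝ) i * Z) := by
        simp_rw [hsymm, integral_mul_dotProduct_mulVec_mul_gibbsDensity hA hUj i hρ hxρ hxAρ, hZ]
    _ = if i = j then 1 else 0 := by
        have hZpos : 0 < Z := hZdef ▸ integral_exp_pos hZint
        rcases eq_or_ne i j with rfl | hij
        · simp [hZpos.ne']
        · simp [hij]

/-- **The lower-right block of `G·A` is the identity.**
For the Gibbs second-moment matrix `G` of the classical impurity model, the
lower-right `(d−p) × (d−p)` block of the product `G·A` equals the identity. -/
theorem GA_lower_right_block_identity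
    (d p : ℕ) (hd : 0 < d) (hp : p ≤ d)
    (A : Matrix (Fin d) (Fin d) ℝ) (hA : A.IsSymm)
    (hA22 : ∀ v : Fin d → ℝ, (∀ i : Fin d, (i : ℕ) < p → v i = 0) → v ≠ 0 →
      0 < v ⬝ᵥ A.mulVec v)
    (U : (Fin d → ℝ) → ℝ) (hUmeas : Measurable U)
    (hU : ∀ x y : Fin d → ℝ, (∀ i : Fin d, (i : ℕ) < p → x i = y i) → U x = U y)
    (hZint : Integrable (fun x : Fin d → ℝ =>
      Real.exp (-(1/2) * (x ⬝ᵥ A.mulVec x) - U x)))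
    (hmom : ∀ i j : Fin d, Integrable (fun x : Fin d → ℝ =>
      x i * x j * Real.exp (-(1/2) * (x ⬝ᵥ A.mulVec x) - U x)))
    (Z : ℝ)
    (hZdef : Z = ∫ x : Fin d → ℝ, Real.exp (-(1/2) * (x ⬝ᵥ A.mulVec x) - U x))
    (G : Matrix (Fin d) (Fin d) ℝ)
    (hGdef : ∀ i j : Fin d, G i j = (1 / Z) * ∫ x : Fin d → ℝ,
      x i * x j * Real.exp (-(1/2) * (x ⬝ᵥ A.mulVec x) - U x)) :
    ∀ i j : Fin d, p ≤ (i : ℕ) → p ≤ (j : ℕ) → (G * A) i j = (if i = j then 1 else 0) :=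
  GA_lower_right_block_identity_general d p A hA U hU hZint hmom Z hZdef G hGdef
end
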